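/- arXiv:2205.04191 — 6 statements merged into one kernel-verified Lean document; each statement's English description precedes it below -/
import Mathlib

section
/- A 2×2 complex matrix Z is a strict contraction (operator norm < 1) if and only if the diagonal entries of I - Z*Z are positive and det(I - Z*Z) > 0. Equivalently, for Z_ν = [[y₁/(nλ₀), νw],[w/ν, y₂/n]] with w² = (y₁y₂-n²q)/(n²λ₀), ‖Z_ν‖ < 1 if and only if ν² < n²|λ₀|(1 - |y₂|²/n²)/|y₁y₂ - n²q| and ν² + 1/ν² < n²|λ₀|(1 - |y₁|²/(n²|λ₀|²) - |y₂|²/n² + |q|²/(|λ₀|²))/|y₁y₂ - n²q|. -/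
/-!
`‖Z‖ ≤ C` says that `C² - Z*Z` is positive semidefinite; for a `2 × 2` matrix with columns
`z₁, z₂` this means `‖z₁‖², ‖z₂‖² ≤ C²` and `|⟪z₁, z₂⟫|² ≤ (C² - ‖z₁‖²)(C² - ‖z₂‖²)`, the
criterion for a Hermitian `2 × 2` form. At `C = 1` the strict version characterises `‖Z‖ < 1`,
and Lagrange's identity `‖z₁‖²‖z₂‖² - |⟪z₁, z₂⟫|² = |det Z|²` turns it into
`‖z₂‖² < 1` and `‖Z‖_F² < 1 + |det Z|²`. For `Z_ν` one has `det Z_ν = q / λ₀` and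
`|w|² = |y₁y₂ - n²q| / (n²|λ₀|)`, and the two conditions become the stated bounds on `ν`.
-/
open Matrix Complex

/-- Operator norm of a 2×2 complex matrix, acting on `EuclideanSpace ℂ (Fin 2)`. -/
noncomputable def opNorm (Z : Matrix (Fin 2) (Fin 2) ℂ) : ℝ :=
  ‖Matrix.toEuclideanCLM (𝕜 := ℂ) (n := Fin 2) Z‖

open ComplexConjugate Filter Topology

theorem two_mul_mul_le_of_sq_le_mul {α β t : ℝ} (hα : 0 ≤ α) (hβ : 0 ≤ β) (h : t ^ 2 ≤ α * β)
    (x y : ℝ) : 2 * t * x * y ≤ α * x ^ 2 + β * y ^ 2 := by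
  have hS : 0 ≤ α * x ^ 2 + β * y ^ 2 := by positivity
  nlinarith [mul_le_mul_of_nonneg_right h (sq_nonneg (x * y)), sq_nonneg (α * x ^ 2 - β * y ^ 2)]

theorem EuclideanSpace.forall_fin_two {𝕜 : Type*} [RCLike 𝕜]
    {P : EuclideanSpace 𝕜 (Fin 2) → Prop} : (∀ x, P x) ↔ ∀ u v, P !₂[u, v] := by
  refine ⟨fun h u v => h _, fun h x => ?_⟩
  have hx : x = !₂[x 0, x 1] := by ext i; fin_cases i <;> rfl
  exact hx ▸ h (x 0) (x 1)

theorem EuclideanSpace.norm_fin_two_sq {𝕜 : Type*} [RCLike 𝕜] (u v : 𝕜) :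
    ‖!₂[u, v]‖ ^ 2 = ‖u‖ ^ 2 + ‖v‖ ^ 2 := by
  simp [EuclideanSpace.norm_sq_eq, Fin.sum_univ_two]

theorem norm_toEuclideanCLM_fin_two_sq (a b c d u v : ℂ) :
    ‖toEuclideanCLM (𝕜 := ℂ) !![a, b; c, d] !₂[u, v]‖ ^ 2 =
      (‖a‖ ^ 2 + ‖c‖ ^ 2) * ‖u‖ ^ 2 + (‖b‖ ^ 2 + ‖d‖ ^ 2) * ‖v‖ ^ 2
        + 2 * ((a * conj b + c * conj d) * (u * conj v)).re := by
  have hrows : ‖toEuclideanCLM (𝕜 := ℂ) !![a, b; c, d] !₂[u, v]‖ ^ 2 =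
      ‖u * a + v * b‖ ^ 2 + ‖u * c + v * d‖ ^ 2 := by
    simp [EuclideanSpace.norm_sq_eq, Fin.sum_univ_two]
  simp only [hrows, Complex.sq_norm, normSq_apply, mul_re, mul_im, add_re, add_im, conj_re,
    conj_im]
  ring

theorem two_re_mul_conj_le_iff (α β : ℝ) (τ : ℂ) :
    (∀ u v : ℂ, 2 * (τ * (u * conj v)).re ≤ α * ‖u‖ ^ 2 + β * ‖v‖ ^ 2) ↔
      0 ≤ α ∧ 0 ≤ β ∧ ‖τ‖ ^ 2 ≤ α * β := by
  constructor
  · intro h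
    have hα : 0 ≤ α := by simpa using h 1 0
    have hβ : 0 ≤ β := by simpa using h 0 1
    -- along `u = r • conj τ, v = 1` the form is a nonnegative real quadratic in `r`
    have hdiscr : discrim (α * ‖τ‖ ^ 2) (-(2 * ‖τ‖ ^ 2)) β ≤ 0 := by
      refine discrim_le_zero fun r => ?_
      have hr := h (r * conj τ) 1
      simp only [map_one, mul_one, norm_one, one_pow, norm_mul, Complex.norm_real,
        Complex.norm_conj, Real.norm_eq_abs, mul_pow, sq_abs] at hr
      have hre : (τ * (r * conj τ)).re = r * ‖τ‖ ^ 2 := by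
        rw [mul_left_comm, Complex.mul_conj, ← Complex.ofReal_mul, Complex.ofReal_re,
          Complex.normSq_eq_norm_sq]
      rw [hre] at hr
      nlinarith
    refine ⟨hα, hβ, ?_⟩
    rw [discrim] at hdiscr
    nlinarith [mul_nonneg hα hβ, sq_nonneg ‖τ‖]
  · rintro ⟨hα, hβ, hτ⟩ u v
    calc 2 * (τ * (u * conj v)).re ≤ 2 * ‖τ‖ * ‖u‖ * ‖v‖ := by
          rw [mul_assoc, mul_assoc]
          gcongr
          refine (Complex.re_le_norm _).trans_eq ?_
          rw [norm_mul, norm_mul, Complex.norm_conj]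
      _ ≤ α * ‖u‖ ^ 2 + β * ‖v‖ ^ 2 := two_mul_mul_le_of_sq_le_mul hα hβ hτ _ _

theorem opNorm_fin_two_le_iff {C : ℝ} (hC : 0 ≤ C) (a b c d : ℂ) :
    opNorm !![a, b; c, d] ≤ C ↔
      ‖a‖ ^ 2 + ‖c‖ ^ 2 ≤ C ^ 2 ∧ ‖b‖ ^ 2 + ‖d‖ ^ 2 ≤ C ^ 2 ∧
        ‖a * conj b + c * conj d‖ ^ 2 ≤
          (C ^ 2 - (‖a‖ ^ 2 + ‖c‖ ^ 2)) * (C ^ 2 - (‖b‖ ^ 2 + ‖d‖ ^ 2)) := by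
  rw [opNorm, ContinuousLinearMap.opNorm_le_iff hC, EuclideanSpace.forall_fin_two,
    ← sub_nonneg (a := C ^ 2), ← sub_nonneg (a := C ^ 2),
    ← two_re_mul_conj_le_iff]
  refine forall₂_congr fun u v => ?_
  rw [← pow_le_pow_iff_left₀ (norm_nonneg _) (by positivity) two_ne_zero, mul_pow,
    EuclideanSpace.norm_fin_two_sq, norm_toEuclideanCLM_fin_two_sq]
  constructor <;> intro h <;> linarith

theorem opNorm_fin_two_lt_one_iff (a b c d : ℂ) :
    opNorm !![a, b; c, d] < 1 ↔
      ‖a‖ ^ 2 + ‖c‖ ^ 2 < 1 ∧ ‖b‖ ^ 2 + ‖d‖ ^ 2 < 1 ∧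
        ‖a * conj b + c * conj d‖ ^ 2 < (1 - (‖a‖ ^ 2 + ‖c‖ ^ 2)) * (1 - (‖b‖ ^ 2 + ‖d‖ ^ 2)) := by
  set p := ‖a‖ ^ 2 + ‖c‖ ^ 2
  set s := ‖b‖ ^ 2 + ‖d‖ ^ 2
  set t := ‖a * conj b + c * conj d‖ ^ 2
  have hp : 0 ≤ p := by positivity
  constructor
  · intro hZ
    have hZ0 : 0 ≤ opNorm !![a, b; c, d] := norm_nonneg _
    obtain ⟨hpZ, hsZ, htZ⟩ := (opNorm_fin_two_le_iff hZ0 a b c d).1 le_rfl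
    have hZ1 : opNorm !![a, b; c, d] ^ 2 < 1 := by nlinarith
    refine ⟨hpZ.trans_lt hZ1, hsZ.trans_lt hZ1, htZ.trans_lt ?_⟩
    exact mul_lt_mul'' (by linarith) (by linarith) (by linarith) (by linarith)
  · rintro ⟨hp1, hs1, ht1⟩
    -- the three strict inequalities survive replacing `1` by some `μ < 1`
    have hnear : ∀ᶠ μ in 𝓝 (1 : ℝ), p < μ ∧ s < μ ∧ t < (μ - p) * (μ - s) :=
      (lt_mem_nhds hp1).and ((lt_mem_nhds hs1).and
        (continuousAt_const.eventually_lt (by fun_prop) ht1))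
    obtain ⟨μ, ⟨hpμ, hsμ, htμ⟩, hμ1⟩ :=
      ((hnear.filter_mono nhdsWithin_le_nhds).and (self_mem_nhdsWithin (s := Set.Iio 1))).exists
    have hμ0 : 0 ≤ μ := hp.trans hpμ.le
    calc opNorm !![a, b; c, d] ≤ √μ := by
          rw [opNorm_fin_two_le_iff (Real.sqrt_nonneg μ), Real.sq_sqrt hμ0]
          exact ⟨hpμ.le, hsμ.le, htμ.le⟩
      _ < 1 := (Real.sqrt_lt' one_pos).2 (by rwa [one_pow])

theorem norm_sq_add_mul_norm_sq_add_sub_norm_sq (a b c d : ℂ) :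
    (‖a‖ ^ 2 + ‖c‖ ^ 2) * (‖b‖ ^ 2 + ‖d‖ ^ 2) - ‖a * conj b + c * conj d‖ ^ 2 =
      ‖a * d - b * c‖ ^ 2 := by
  simp only [Complex.sq_norm, normSq_apply, mul_re, mul_im, add_re, add_im, sub_re, sub_im,
    conj_re, conj_im]
  ring

theorem opNorm_fin_two_lt_one_iff_det (a b c d : ℂ) :
    opNorm !![a, b; c, d] < 1 ↔
      ‖b‖ ^ 2 + ‖d‖ ^ 2 < 1 ∧
        ‖a‖ ^ 2 + ‖b‖ ^ 2 + ‖c‖ ^ 2 + ‖d‖ ^ 2 < 1 + ‖(!![a, b; c, d] : Matrix _ _ ℂ).det‖ ^ 2 := by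
  have hlag := norm_sq_add_mul_norm_sq_add_sub_norm_sq a b c d
  have ht : 0 ≤ ‖a * conj b + c * conj d‖ ^ 2 := by positivity
  rw [opNorm_fin_two_lt_one_iff, det_fin_two_of]
  constructor
  · rintro ⟨-, hs, ht1⟩
    exact ⟨hs, by nlinarith⟩
  · rintro ⟨hs, hF⟩
    have ht1 : ‖a * conj b + c * conj d‖ ^ 2 <
        (1 - (‖a‖ ^ 2 + ‖c‖ ^ 2)) * (1 - (‖b‖ ^ 2 + ‖d‖ ^ 2)) := by nlinarith
    exact ⟨by nlinarith, hs, ht1⟩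

theorem stmt1_general (n : ℕ) (hn : 0 < n) (lam0 y1 y2 q w : ℂ)
    (hlam0 : lam0 ≠ 0)
    (hq : y1 * y2 ≠ (n : ℂ) ^ 2 * q)
    (ν : ℝ) (hν : 0 < ν)
    (hw : w ^ 2 = (y1 * y2 - (n : ℂ) ^ 2 * q) / ((n : ℂ) ^ 2 * lam0))
    (Z : Matrix (Fin 2) (Fin 2) ℂ)
    (hZ : Z = !![y1 / ((n : ℂ) * lam0), (ν : ℂ) * w; w / (ν : ℂ), y2 / (n : ℂ)]) :
    opNorm Z < 1 ↔
      (ν ^ 2 < (n : ℝ) ^ 2 * ‖lam0‖ * (1 - ‖y2‖ ^ 2 / (n : ℝ) ^ 2)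
          / ‖y1 * y2 - (n : ℂ) ^ 2 * q‖ ∧
        ν ^ 2 + 1 / ν ^ 2 <
          (n : ℝ) ^ 2 * ‖lam0‖ *
              (1 - ‖y1‖ ^ 2 / ((n : ℝ) ^ 2 * ‖lam0‖ ^ 2)
                - ‖y2‖ ^ 2 / (n : ℝ) ^ 2
                + ‖q‖ ^ 2 / ‖lam0‖ ^ 2)
            / ‖y1 * y2 - (n : ℂ) ^ 2 * q‖) := by
  have hnC : (n : ℂ) ≠ 0 := Nat.cast_ne_zero.2 hn.ne'
  have hνC : (ν : ℂ) ≠ 0 := Complex.ofReal_ne_zero.2 hν.ne'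
  have hw2 : ‖w‖ ^ 2 = ‖y1 * y2 - (n : ℂ) ^ 2 * q‖ / ((n : ℝ) ^ 2 * ‖lam0‖) := by
    simpa using congrArg (‖·‖) hw
  have hw2_pos : 0 < ‖w‖ ^ 2 := by
    rw [hw2]
    have hK : y1 * y2 - (n : ℂ) ^ 2 * q ≠ 0 := sub_ne_zero.2 hq
    positivity
  have hdet : Z.det = q / lam0 := by
    have hoff : (ν : ℂ) * w * (w / ν) = w ^ 2 := by field_simp
    rw [hZ, det_fin_two_of, hoff, hw]
    field_simp
    ring
  have hrhs (X : ℝ) : (n : ℝ) ^ 2 * ‖lam0‖ * X / ‖y1 * y2 - (n : ℂ) ^ 2 * q‖ = X / ‖w‖ ^ 2 := by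
    rw [hw2, div_div_eq_mul_div, mul_comm]
  rw [hZ, opNorm_fin_two_lt_one_iff_det, ← hZ, hdet, hrhs, hrhs, lt_div_iff₀ hw2_pos,
    lt_div_iff₀ hw2_pos]
  simp only [norm_mul, norm_div, Complex.norm_real, Complex.norm_natCast, Real.norm_eq_abs,
    mul_pow, div_pow, sq_abs]
  refine and_congr ⟨fun h => by linarith, fun h => by linarith⟩ ?_
  rw [add_mul, one_div_mul_eq_div]
  constructor <;> intro h <;> linarith

/-- for `Z_ν = [[y₁/(nλ₀), νw],[w/ν, y₂/n]]` with
`w² = (y₁y₂-n²q)/(n²λ₀)`, `‖Z_ν‖ < 1` iff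
`ν² < n²|λ₀|(1 - |y₂|²/n²)/|y₁y₂ - n²q|` and
`ν² + 1/ν² < n²|λ₀|(1 - |y₁|²/(n²|λ₀|²) - |y₂|²/n² + |q|²/|λ₀|²)/|y₁y₂ - n²q|`. -/
theorem stmt1 (n : ℕ) (hn : 0 < n) (lam0 y1 y2 q w : ℂ)
    (hlam0 : lam0 ≠ 0) (hlam1 : ‖lam0‖ < 1)
    (hq : y1 * y2 ≠ (n : ℂ) ^ 2 * q)
    (ν : ℝ) (hν : 0 < ν)
    (hw : w ^ 2 = (y1 * y2 - (n : ℂ) ^ 2 * q) / ((n : ℂ) ^ 2 * lam0))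
    (Z : Matrix (Fin 2) (Fin 2) ℂ)
    (hZ : Z = !![y1 / ((n : ℂ) * lam0), (ν : ℂ) * w; w / (ν : ℂ), y2 / (n : ℂ)]) :
    opNorm Z < 1 ↔
      (ν ^ 2 < (n : ℝ) ^ 2 * ‖lam0‖ * (1 - ‖y2‖ ^ 2 / (n : ℝ) ^ 2)
          / ‖y1 * y2 - (n : ℂ) ^ 2 * q‖ ∧
        ν ^ 2 + 1 / ν ^ 2 <
          (n : ℝ) ^ 2 * ‖lam0‖ *
              (1 - ‖y1‖ ^ 2 / ((n : ℝ) ^ 2 * ‖lam0‖ ^ 2)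
                - ‖y2‖ ^ 2 / (n : ℝ) ^ 2
                + ‖q‖ ^ 2 / ‖lam0‖ ^ 2)
            / ‖y1 * y2 - (n : ℂ) ^ 2 * q‖) :=
  stmt1_general n hn lam0 y1 y2 q w hlam0 hq ν hν hw Z hZ
end

section
/- Let R = |λ₀|(C² - |y₂|²)/|y₁y₂ - C²q| and X = (|λ₀|/|y₁y₂ - C²q|)·(C² - |y₁|²/|λ₀|² - |y₂|² + C²|q|²/|λ₀|²), where C > 0 and y₁y₂ ≠ C²q. Then R + 1/R - X = C²|y₁ - ȳ₂q|² / (|λ₀|(C² - |y₂|²)|y₁y₂ - C²q|); in particular, if |y₂| < C then R + 1/R ≥ X, with strict inequality when y₁ ≠ ȳ₂q. -/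
open Complex

/-! `R + 1/R - X` has common denominator `|λ₀|(C² - |y₂|²)|y₁y₂ - C²q|`, and its numerator
`|y₁y₂ - C²q|² + (C² - |y₂|²)(|y₁|² - C²|q|²)` equals `C²|y₁ - ȳ₂q|²` by a Lagrange-type identity.
For `|y₂| < C` every factor of the denominator is positive, which gives both inequalities. -/

theorem sq_norm_mul_sub_add_eq_sq_norm_sub_conj_mul (c : ℝ) (y1 y2 q : ℂ) :
    ‖y1 * y2 - (c : ℂ) ^ 2 * q‖ ^ 2 + (c ^ 2 - ‖y2‖ ^ 2) * (‖y1‖ ^ 2 - c ^ 2 * ‖q‖ ^ 2) =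
      c ^ 2 * ‖y1 - (starRingEnd ℂ) y2 * q‖ ^ 2 := by
  rw [← ofReal_pow]
  simp only [Complex.sq_norm, normSq_apply, sub_re, sub_im, mul_re, mul_im, ofReal_re, ofReal_im,
    conj_re, conj_im]
  ring

theorem stmt2_general (C : ℝ) (lam0 y1 y2 q : ℂ) (hlam0 : lam0 ≠ 0)
    (hq : y1 * y2 ≠ (C : ℂ) ^ 2 * q) (hy2 : ‖y2‖ < C)
    (R X : ℝ)
    (hR : R = ‖lam0‖ * (C ^ 2 - ‖y2‖ ^ 2)
        / ‖y1 * y2 - (C : ℂ) ^ 2 * q‖)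
    (hX : X = ‖lam0‖ / ‖y1 * y2 - (C : ℂ) ^ 2 * q‖
        * (C ^ 2 - ‖y1‖ ^ 2 / ‖lam0‖ ^ 2
            - ‖y2‖ ^ 2 + C ^ 2 * ‖q‖ ^ 2 / ‖lam0‖ ^ 2)) :
    R + 1 / R - X =
        C ^ 2 * ‖y1 - (starRingEnd ℂ) y2 * q‖ ^ 2
          / (‖lam0‖ * (C ^ 2 - ‖y2‖ ^ 2)
              * ‖y1 * y2 - (C : ℂ) ^ 2 * q‖) ∧
      X ≤ R + 1 / R ∧
      (y1 ≠ (starRingEnd ℂ) y2 * q → X < R + 1 / R) := by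
  have hlam : 0 < ‖lam0‖ := norm_pos_iff.2 hlam0
  have hD : 0 < ‖y1 * y2 - (C : ℂ) ^ 2 * q‖ := norm_pos_iff.2 (sub_ne_zero.2 hq)
  have hS : 0 < C ^ 2 - ‖y2‖ ^ 2 :=
    sub_pos.2 (pow_lt_pow_left₀ hy2 (norm_nonneg _) two_ne_zero)
  have hdiff : R + 1 / R - X = C ^ 2 * ‖y1 - (starRingEnd ℂ) y2 * q‖ ^ 2
      / (‖lam0‖ * (C ^ 2 - ‖y2‖ ^ 2) * ‖y1 * y2 - (C : ℂ) ^ 2 * q‖) := by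
    rw [← sq_norm_mul_sub_add_eq_sq_norm_sub_conj_mul, hR, hX]
    field_simp
    ring
  refine ⟨hdiff, sub_nonneg.1 (hdiff ▸ by positivity), fun hne => sub_pos.1 (hdiff ▸ ?_)⟩
  have hC : 0 < C := (norm_nonneg y2).trans_lt hy2
  have hE : 0 < ‖y1 - (starRingEnd ℂ) y2 * q‖ := norm_pos_iff.2 (sub_ne_zero.2 hne)
  positivity

/-- with `R = |λ₀|(C² - |y₂|²)/|y₁y₂ - C²q|` and
`X = (|λ₀|/|y₁y₂ - C²q|)(C² - |y₁|²/|λ₀|² - |y₂|² + C²|q|²/|λ₀|²)`,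
`R + 1/R - X = C²|y₁ - ȳ₂q|²/(|λ₀|(C² - |y₂|²)|y₁y₂ - C²q|)`;
if `|y₂| < C` then `R + 1/R ≥ X`, strictly when `y₁ ≠ ȳ₂q`. -/
theorem stmt2 (C : ℝ) (hC : 0 < C) (lam0 y1 y2 q : ℂ) (hlam0 : lam0 ≠ 0)
    (hq : y1 * y2 ≠ (C : ℂ) ^ 2 * q) (hy2 : ‖y2‖ < C)
    (R X : ℝ)
    (hR : R = ‖lam0‖ * (C ^ 2 - ‖y2‖ ^ 2)
        / ‖y1 * y2 - (C : ℂ) ^ 2 * q‖)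
    (hX : X = ‖lam0‖ / ‖y1 * y2 - (C : ℂ) ^ 2 * q‖
        * (C ^ 2 - ‖y1‖ ^ 2 / ‖lam0‖ ^ 2
            - ‖y2‖ ^ 2 + C ^ 2 * ‖q‖ ^ 2 / ‖lam0‖ ^ 2)) :
    R + 1 / R - X =
        C ^ 2 * ‖y1 - (starRingEnd ℂ) y2 * q‖ ^ 2
          / (‖lam0‖ * (C ^ 2 - ‖y2‖ ^ 2)
              * ‖y1 * y2 - (C : ℂ) ^ 2 * q‖) ∧
      X ≤ R + 1 / R ∧
      (y1 ≠ (starRingEnd ℂ) y2 * q → X < R + 1 / R) :=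
  stmt2_general C lam0 y1 y2 q hlam0 hq hy2 R X hR hX
end

section
/- Let C > 0, λ₀ ∈ ℂ with 0 < |λ₀| < 1, and y₁, y₂, q ∈ ℂ with y₁y₂ ≠ C²q, |y₂| ≤ |y₁|, and (C|y₁ - ȳ₂q| + |y₁y₂ - C²q|)/(C² - |y₂|²) < |λ₀| (where also |y₂| < C). Then C² - |y₁|²/|λ₀|² - |y₂|² + C²|q|²/|λ₀|² > 2|y₁y₂ - C²q|/|λ₀|. -/
/-!
Write `L = |λ₀|`, `D = C² - |y₂|²`, `A = |y₁ - ȳ₂q|` and `B = |y₁y₂ - C²q|`. The polynomial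
identity `C²A² - B² = D (|y₁|² - C²|q|²)` turns the claim, after clearing the denominators
`L²` and `D`, into `C²A² < (LD - B)²`, which is the square of the hypothesis `CA < LD - B`.
-/

open Complex

theorem sq_mul_norm_sub_sq_norm_eq_mul (C : ℝ) (y1 y2 q : ℂ) :
    (C * ‖y1 - starRingEnd ℂ y2 * q‖) ^ 2 - ‖y1 * y2 - (C : ℂ) ^ 2 * q‖ ^ 2
      = (C ^ 2 - ‖y2‖ ^ 2) * (‖y1‖ ^ 2 - C ^ 2 * ‖q‖ ^ 2) := by
  simp only [mul_pow, ← normSq_eq_norm_sq, normSq_apply, sub_re, sub_im, mul_re, mul_im, conj_re,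
    conj_im, ofReal_re, ofReal_im, ← ofReal_pow]
  ring

theorem two_mul_div_lt_sub_div_sq {x y L D E : ℝ} (hx : 0 ≤ x) (hL : 0 < L) (hD : 0 < D)
    (hxy : x + y < D * L) (hE : x ^ 2 - y ^ 2 = D * E) :
    2 * y / L < D - E / L ^ 2 := by
  have hsq : x ^ 2 < (L * D - y) ^ 2 := pow_lt_pow_left₀ (by linarith) hx two_ne_zero
  have hDE : D * E < D * (L ^ 2 * D - 2 * L * y) := by nlinarith
  have hE_lt : E < L ^ 2 * D - 2 * L * y := lt_of_mul_lt_mul_left hDE hD.le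
  have hdiff : D - E / L ^ 2 - 2 * y / L = (L ^ 2 * D - 2 * L * y - E) / L ^ 2 := by
    field_simp
    ring
  have := div_pos (sub_pos.mpr hE_lt) (pow_pos hL 2)
  linarith

theorem stmt4_general (C : ℝ) (lam0 y1 y2 q : ℂ)
    (hy2 : ‖y2‖ < C)
    (hPhi : (C * ‖y1 - (starRingEnd ℂ) y2 * q‖
        + ‖y1 * y2 - (C : ℂ) ^ 2 * q‖) / (C ^ 2 - ‖y2‖ ^ 2)
        < ‖lam0‖) :
    2 * ‖y1 * y2 - (C : ℂ) ^ 2 * q‖ / ‖lam0‖ <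
      C ^ 2 - ‖y1‖ ^ 2 / ‖lam0‖ ^ 2 - ‖y2‖ ^ 2
        + C ^ 2 * ‖q‖ ^ 2 / ‖lam0‖ ^ 2 := by
  have hC : 0 ≤ C := (norm_nonneg y2).trans hy2.le
  have hD : 0 < C ^ 2 - ‖y2‖ ^ 2 :=
    sub_pos.mpr (pow_lt_pow_left₀ hy2 (norm_nonneg y2) two_ne_zero)
  have hL : 0 < ‖lam0‖ := lt_of_le_of_lt (by positivity) hPhi
  have hsum := (div_lt_iff₀' hD).mp hPhi
  convert two_mul_div_lt_sub_div_sq (by positivity) hL hD hsum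
    (sq_mul_norm_sub_sq_norm_eq_mul C y1 y2 q) using 1
  ring

/-- if `0 < |λ₀| < 1`, `y₁y₂ ≠ C²q`, `|y₂| ≤ |y₁|`, `|y₂| < C` and
`(C|y₁ - ȳ₂q| + |y₁y₂ - C²q|)/(C² - |y₂|²) < |λ₀|`, then
`C² - |y₁|²/|λ₀|² - |y₂|² + C²|q|²/|λ₀|² > 2|y₁y₂ - C²q|/|λ₀|`. -/
theorem stmt4 (C : ℝ) (hC : 0 < C) (lam0 y1 y2 q : ℂ)
    (hlam0 : 0 < ‖lam0‖) (hlam1 : ‖lam0‖ < 1)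
    (hq : y1 * y2 ≠ (C : ℂ) ^ 2 * q)
    (hy : ‖y2‖ ≤ ‖y1‖) (hy2 : ‖y2‖ < C)
    (hPhi : (C * ‖y1 - (starRingEnd ℂ) y2 * q‖
        + ‖y1 * y2 - (C : ℂ) ^ 2 * q‖) / (C ^ 2 - ‖y2‖ ^ 2)
        < ‖lam0‖) :
    2 * ‖y1 * y2 - (C : ℂ) ^ 2 * q‖ / ‖lam0‖ <
      C ^ 2 - ‖y1‖ ^ 2 / ‖lam0‖ ^ 2 - ‖y2‖ ^ 2
        + C ^ 2 * ‖q‖ ^ 2 / ‖lam0‖ ^ 2 :=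
  stmt4_general C lam0 y1 y2 q hy2 hPhi
end

section
/- Let E be the space of 2×2 diagonal complex matrices, and for B ∈ ℂ^{2×2} define μ_E(B) = 1 / inf{‖X‖ : X ∈ E, I - BX singular} (with μ_E(B) = 0 if I - BX is invertible for all X ∈ E). Then for r > 0, μ_E(B) ≤ 1/r if and only if 1 - z·B₁₁ - w·B₂₂ + zw·det B ≠ 0 for all z, w in the open disc of radius r centered at 0. -/
open Matrix

/-- The structured singular value `μ_E(B)` relative to the space `E` of 2×2 diagonal
matrices: `μ_E(B) = 1 / inf{‖X‖ : X ∈ E, I - BX singular}`, with the convention that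
`μ_E(B) = 0` when `I - BX` is invertible for every diagonal `X`
(the norm of `diag(z,w)` being `max(|z|,|w|)`). -/
noncomputable def muE (B : Matrix (Fin 2) (Fin 2) ℂ) : ℝ :=
  (sInf {t : ℝ | ∃ z w : ℂ, t = max ‖z‖ ‖w‖ ∧
      (1 - B * !![z, 0; 0, w]).det = 0})⁻¹

/-! Expanding `det (I - B diag(z, w))` gives `1 - z B₁₁ - w B₂₂ + z w det B`. By the triangle
inequality every zero `(z, w)` of this polynomial has
`max(|z|, |w|) ≥ 1 / (1 + |B₁₁| + |B₂₂| + |det B|)`, so the infimum defining `μ_E(B)` is positive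
whenever it is taken over a nonempty set, and then `μ_E(B) ≤ 1/r` says exactly that every zero
has `max(|z|, |w|) ≥ r`. -/

theorem Real.inv_sInf_le_inv_iff {S : Set ℝ} {δ r : ℝ} (hδ : 0 < δ) (hδS : ∀ t ∈ S, δ ≤ t)
    (hr : 0 < r) : (sInf S)⁻¹ ≤ r⁻¹ ↔ ∀ t ∈ S, r ≤ t := by
  constructor
  · intro h t ht
    have hpos : 0 < sInf S := hδ.trans_le (le_csInf ⟨t, ht⟩ hδS)
    exact ((inv_le_inv₀ hpos hr).1 h).trans (csInf_le ⟨δ, hδS⟩ ht)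
  · intro h
    rcases S.eq_empty_or_nonempty with rfl | hne
    · simpa using hr.le
    · exact inv_anti₀ hr (le_csInf hne h)

theorem Matrix.det_one_sub_mul_diag_fin_two {R : Type*} [CommRing R]
    (B : Matrix (Fin 2) (Fin 2) R) (z w : R) :
    (1 - B * !![z, 0; 0, w]).det = 1 - z * B 0 0 - w * B 1 1 + z * w * B.det := by
  simp [det_fin_two, mul_apply, Fin.sum_univ_two]
  ring

section NormedField

variable {𝕜 : Type*} [NormedField 𝕜] {a b c z w : 𝕜}

theorem one_le_of_one_sub_sub_add_mul_eq_zero (h : 1 - z * a - w * b + z * w * c = 0) :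
    1 ≤ ‖z‖ * ‖a‖ + ‖w‖ * ‖b‖ + ‖z‖ * ‖w‖ * ‖c‖ := by
  have h1 : (1 : 𝕜) = z * a + w * b - z * w * c := by linear_combination h
  calc (1 : ℝ) = ‖z * a + w * b - z * w * c‖ := by rw [← h1, norm_one]
    _ ≤ ‖z * a‖ + ‖w * b‖ + ‖z * w * c‖ :=
      (norm_sub_le _ _).trans (by gcongr; exact norm_add_le _ _)
    _ = _ := by simp only [norm_mul]

theorem inv_le_max_norm_of_one_sub_sub_add_mul_eq_zero (h : 1 - z * a - w * b + z * w * c = 0) :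
    (1 + ‖a‖ + ‖b‖ + ‖c‖)⁻¹ ≤ max ‖z‖ ‖w‖ := by
  set t := max ‖z‖ ‖w‖
  have hz : ‖z‖ ≤ t := le_max_left _ _
  have hw : ‖w‖ ≤ t := le_max_right _ _
  have hzw : ‖z‖ * ‖w‖ ≤ t * t := mul_le_mul hz hw (norm_nonneg _) ((norm_nonneg _).trans hz)
  have h1 : 1 ≤ t * ‖a‖ + t * ‖b‖ + t * t * ‖c‖ := by
    nlinarith [one_le_of_one_sub_sub_add_mul_eq_zero h, norm_nonneg a, norm_nonneg b, norm_nonneg c]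
  rw [inv_le_iff_one_le_mul₀ (by positivity)]
  rcases le_total t 1 with ht | ht
  · nlinarith [norm_nonneg a, norm_nonneg b, norm_nonneg c, (norm_nonneg z).trans hz]
  · nlinarith [norm_nonneg a, norm_nonneg b, norm_nonneg c]

end NormedField

theorem muE_le_inv_iff (B : Matrix (Fin 2) (Fin 2) ℂ) {r : ℝ} (hr : 0 < r) :
    muE B ≤ r⁻¹ ↔ ∀ z w : ℂ, (1 - B * !![z, 0; 0, w]).det = 0 → r ≤ max ‖z‖ ‖w‖ := by
  rw [muE, Real.inv_sInf_le_inv_iff (δ := (1 + ‖B 0 0‖ + ‖B 1 1‖ + ‖B.det‖)⁻¹) (by positivity) _ hr]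
  · simp only [Set.mem_ofPred_eq, forall_exists_index, and_imp]
    exact ⟨fun h z w hzw => h _ z w rfl hzw, fun h _ z w ht hzw => ht ▸ h z w hzw⟩
  · rintro _ ⟨z, w, rfl, h⟩
    exact inv_le_max_norm_of_one_sub_sub_add_mul_eq_zero
      (by rwa [det_one_sub_mul_diag_fin_two] at h)

/-- for `r > 0`, `μ_E(B) ≤ 1/r` iff
`1 - z·B₁₁ - w·B₂₂ + zw·det B ≠ 0` for all `z, w` with `|z| < r`, `|w| < r`. -/
theorem stmt10 (B : Matrix (Fin 2) (Fin 2) ℂ) (r : ℝ) (hr : 0 < r) :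
    muE B ≤ 1 / r ↔
      ∀ z w : ℂ, ‖z‖ < r → ‖w‖ < r →
        1 - z * B 0 0 - w * B 1 1 + z * w * B.det ≠ 0 := by
  rw [one_div, muE_le_inv_iff B hr]
  refine forall₂_congr fun z w => ?_
  rw [det_one_sub_mul_diag_fin_two, le_max_iff, ← not_lt, ← not_lt]
  tauto
end

section
/- Every analytic map φ = (φ₁,…,φₙ) : 𝔻 → G̃ₙ lifts to analytic matrix-valued functions: for each 1 ≤ j ≤ ⌊n/2⌋, the function F_j(λ) = [[φ_j(λ), φ_j(λ)φ_{n-j}(λ) - φₙ(λ)],[1, φ_{n-j}(λ)]] is analytic on 𝔻, satisfies det F_j = φ_j φ_{n-j} - (φ_j φ_{n-j} - φₙ) = φₙ, and μ_E(F_j(λ)) < 1 for all λ ∈ 𝔻 (after rescaling entries by binomial coefficients as appropriate). -/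
open Matrix

/-- The extended symmetrized polydisc `G̃ₙ ⊂ ℂⁿ`, a point being recorded as the pair
`(y, q)` with `y : Fin (n-1) → ℂ` listing `y₁, …, y_{n-1}` (index `j` holds `y_{j+1}`)
and `q` the last coordinate; `y_{n-j}` corresponds to `y j.rev`. -/
def Gtilde (n : ℕ) : Set ((Fin (n - 1) → ℂ) × ℂ) :=
  {p | ‖p.2‖ < 1 ∧ ∃ β : Fin (n - 1) → ℂ, ∀ j : Fin (n - 1),
      p.1 j = β j + (starRingEnd ℂ) (β j.rev) * p.2 ∧
      ‖β j‖ + ‖β j.rev‖ < (n.choose (j.val + 1) : ℝ)}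

/-!
With `C = C(n, j)`, clearing denominators gives
`C · det (1 - F diag(x, w)) = C - y_j x - y_{n-j} w + C q x w`. Writing
`y_j = β_j + β̄_{n-j} q` as in the definition of `G̃ₙ`, this is `A + q B` with
`A = C - β_j x - β_{n-j} w` and `B` its reflection. On the closed bidisc `|B| ≤ |A|` and
`|A| ≥ C - |β_j| - |β_{n-j}| > 0`, so `|q| < 1` keeps `A + q B` away from zero. The zero set of
`det (1 - F Δ)` is closed, so the norm attains its infimum on it; that minimum exceeds `1`,
whence `μ_E(F) < 1`.
-/

open Complex ComplexConjugate

lemma bidisc_poly_nonneg {C b c s t : ℝ} (hb : 0 ≤ b) (hc : 0 ≤ c) (hbc : b + c ≤ C)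
    (hs₀ : 0 ≤ s) (hs : s ≤ 1) (ht₀ : 0 ≤ t) (ht : t ≤ 1) :
    0 ≤ C ^ 2 * (1 - s ^ 2 * t ^ 2) + b ^ 2 * (s ^ 2 - t ^ 2) + c ^ 2 * (t ^ 2 - s ^ 2)
      - 2 * C * b * s * (1 - t ^ 2) - 2 * C * c * t * (1 - s ^ 2) := by
  have hcb : b ^ 2 ≤ (C - c) ^ 2 := by nlinarith
  have hbc' : c ^ 2 ≤ (C - b) ^ 2 := by nlinarith
  have hc' : 0 ≤ (C ^ 2 - b ^ 2 + c ^ 2) * (1 + t ^ 2) - 4 * C * c * t := by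
    nlinarith [mul_nonneg (by nlinarith : (0 : ℝ) ≤ C ^ 2 - b ^ 2 + c ^ 2) (sq_nonneg (1 - t)),
      mul_nonneg ht₀ (sub_nonneg.2 hcb)]
  have hb' : 0 ≤ (C ^ 2 + b ^ 2 - c ^ 2) * (1 + s ^ 2) - 4 * C * b * s := by
    nlinarith [mul_nonneg (by nlinarith : (0 : ℝ) ≤ C ^ 2 + b ^ 2 - c ^ 2) (sq_nonneg (1 - s)),
      mul_nonneg hs₀ (sub_nonneg.2 hbc')]
  have key := add_nonneg (mul_nonneg (by nlinarith : (0 : ℝ) ≤ 1 - s ^ 2) hc')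
    (mul_nonneg (by nlinarith : (0 : ℝ) ≤ 1 - t ^ 2) hb')
  linear_combination key / 2

lemma normSq_sub_normSq_reflection (C : ℝ) (β γ a b : ℂ) :
    normSq ((C : ℂ) - β * a - γ * b) - normSq ((C : ℂ) * a * b - conj γ * a - conj β * b)
      = C ^ 2 * (1 - normSq a * normSq b) + normSq β * (normSq a - normSq b)
        + normSq γ * (normSq b - normSq a)
        - 2 * C * (β * a).re * (1 - normSq b) - 2 * C * (γ * b).re * (1 - normSq a) := by
  simp only [normSq_apply, mul_re, mul_im, sub_re, sub_im, ofReal_re, ofReal_im, conj_re, conj_im]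
  ring

/-- `C a b - γ̄ a - β̄ b` is the reflection `a b · conj (A (1/ā, 1/b̄))` of `A = C - β a - γ b`. -/
lemma norm_reflection_le {C : ℝ} {β γ a b : ℂ} (hβγ : ‖β‖ + ‖γ‖ ≤ C) (ha : ‖a‖ ≤ 1)
    (hb : ‖b‖ ≤ 1) :
    ‖(C : ℂ) * a * b - conj γ * a - conj β * b‖ ≤ ‖(C : ℂ) - β * a - γ * b‖ := by
  have hC : 0 ≤ C := (add_nonneg (norm_nonneg β) (norm_nonneg γ)).trans hβγ
  have hβa : (β * a).re ≤ ‖β‖ * ‖a‖ := (re_le_norm _).trans (norm_mul _ _).le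
  have hγb : (γ * b).re ≤ ‖γ‖ * ‖b‖ := (re_le_norm _).trans (norm_mul _ _).le
  have hpoly := bidisc_poly_nonneg (norm_nonneg β) (norm_nonneg γ) hβγ (norm_nonneg a) ha
    (norm_nonneg b) hb
  have hid := normSq_sub_normSq_reflection C β γ a b
  simp only [← Complex.sq_norm] at hid
  have ht : 0 ≤ 1 - ‖b‖ ^ 2 := by nlinarith [norm_nonneg b]
  have hs : 0 ≤ 1 - ‖a‖ ^ 2 := by nlinarith [norm_nonneg a]
  refine le_of_pow_le_pow_left₀ two_ne_zero (norm_nonneg _) ?_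
  nlinarith [mul_nonneg (mul_nonneg hC (sub_nonneg.2 hβa)) ht,
    mul_nonneg (mul_nonneg hC (sub_nonneg.2 hγb)) hs]

lemma reflection_pencil_ne_zero {C : ℝ} {β γ q a b : ℂ} (hβγ : ‖β‖ + ‖γ‖ < C) (hq : ‖q‖ < 1)
    (ha : ‖a‖ ≤ 1) (hb : ‖b‖ ≤ 1) :
    (C : ℂ) - (β + conj γ * q) * a - (γ + conj β * q) * b + C * q * a * b ≠ 0 := by
  set A := (C : ℂ) - β * a - γ * b
  set B := (C : ℂ) * a * b - conj γ * a - conj β * b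
  have hβa : ‖β * a‖ ≤ ‖β‖ := by rw [norm_mul]; exact mul_le_of_le_one_right (norm_nonneg _) ha
  have hγb : ‖γ * b‖ ≤ ‖γ‖ := by rw [norm_mul]; exact mul_le_of_le_one_right (norm_nonneg _) hb
  have hA : 0 < ‖A‖ := by
    have hC : ‖(C : ℂ)‖ ≤ ‖A‖ + ‖β * a‖ + ‖γ * b‖ := by
      have h := norm_add₃_le (a := A) (b := β * a) (c := γ * b)
      rwa [show A + β * a + γ * b = C by simp only [A]; ring] at h
    rw [norm_real, Real.norm_of_nonneg ((by positivity : (0 : ℝ) ≤ ‖β‖ + ‖γ‖).trans hβγ.le)] at hC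
    linarith
  have hqB : ‖q * B‖ < ‖A‖ := by
    rw [norm_mul]
    exact (mul_le_mul_of_nonneg_left (norm_reflection_le hβγ.le ha hb) (norm_nonneg q)).trans_lt
      (mul_lt_of_lt_one_left hA hq)
  rw [show (C : ℂ) - (β + conj γ * q) * a - (γ + conj β * q) * b + C * q * a * b = A + q * B by
    ring]
  intro h
  rw [eq_neg_of_add_eq_zero_left h, norm_neg] at hqB
  exact lt_irrefl _ hqB

noncomputable def liftMatrix (C y₁ y₂ q : ℂ) : Matrix (Fin 2) (Fin 2) ℂ :=
  !![y₁ / C, y₁ * y₂ / C ^ 2 - q; 1, y₂ / C]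

lemma det_liftMatrix {C : ℂ} (hC : C ≠ 0) (y₁ y₂ q : ℂ) : (liftMatrix C y₁ y₂ q).det = q := by
  rw [liftMatrix, det_fin_two_of]
  field_simp
  ring

lemma mul_det_one_sub_liftMatrix_mul_diagonal {C : ℂ} (hC : C ≠ 0) (y₁ y₂ q x w : ℂ) :
    C * (1 - liftMatrix C y₁ y₂ q * !![x, 0; 0, w]).det = C - y₁ * x - y₂ * w + C * q * x * w := by
  rw [liftMatrix, one_fin_two, mul_fin_two, det_fin_two]
  simp only [Matrix.sub_apply, of_apply, cons_val', cons_val_zero, cons_val_one, cons_val_fin_one]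
  field_simp
  ring

lemma differentiableOn_liftMatrix_apply {s : Set ℂ} {C : ℂ} {y₁ y₂ q : ℂ → ℂ}
    (h₁ : DifferentiableOn ℂ y₁ s) (h₂ : DifferentiableOn ℂ y₂ s) (hq : DifferentiableOn ℂ q s)
    (i k : Fin 2) : DifferentiableOn ℂ (fun z => liftMatrix C (y₁ z) (y₂ z) (q z) i k) s := by
  fin_cases i <;> fin_cases k <;>
    simp only [liftMatrix, Fin.zero_eta, Fin.mk_one, of_apply, cons_val', cons_val_zero,
      cons_val_one, cons_val_fin_one] <;>
    fun_prop

lemma muE_lt_one_of_det_ne_zero {B : Matrix (Fin 2) (Fin 2) ℂ}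
    (h : ∀ z w : ℂ, ‖z‖ ≤ 1 → ‖w‖ ≤ 1 → (1 - B * !![z, 0; 0, w]).det ≠ 0) : muE B < 1 := by
  set Z := {v : ℂ × ℂ | (1 - B * !![v.1, 0; 0, v.2]).det = 0}
  have hS : {t : ℝ | ∃ z w : ℂ, t = max ‖z‖ ‖w‖ ∧ (1 - B * !![z, 0; 0, w]).det = 0} =
      norm '' Z := by
    ext t
    simp [Z, Prod.norm_def, eq_comm, and_comm]
  have hZ : IsClosed Z := isClosed_eq (by fun_prop) continuous_const
  rw [muE, hS]
  rcases Z.eq_empty_or_nonempty with hempty | hne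
  · simp [hempty] -- `sInf ∅ = 0`, so `muE B = 0`
  obtain ⟨v, hvZ, hv⟩ := hZ.exists_infDist_eq_dist hne 0
  have hleast : IsLeast (norm '' Z) ‖v‖ := by
    refine ⟨⟨v, hvZ, rfl⟩, ?_⟩
    rintro _ ⟨u, huZ, rfl⟩
    simpa [hv] using Metric.infDist_le_dist_of_mem huZ (x := 0)
  have hv1 : 1 < ‖v‖ := by
    by_contra! hle
    exact h v.1 v.2 ((norm_fst_le v).trans hle) ((norm_snd_le v).trans hle) hvZ
  rw [hleast.csInf_eq]
  exact inv_lt_one_of_one_lt₀ hv1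

theorem stmt13_general (n : ℕ) (φ : ℂ → (Fin (n - 1) → ℂ) × ℂ)
    (hφ : DifferentiableOn ℂ φ (Metric.ball 0 1))
    (hφval : ∀ z ∈ Metric.ball (0 : ℂ) 1, φ z ∈ Gtilde n)
    (j : Fin (n - 1))
    (F : ℂ → Matrix (Fin 2) (Fin 2) ℂ)
    (hF : ∀ z, F z =
      !![(φ z).1 j / (n.choose (j.val + 1) : ℂ),
          (φ z).1 j * (φ z).1 j.rev / (n.choose (j.val + 1) : ℂ) ^ 2 - (φ z).2;
        1, (φ z).1 j.rev / (n.choose (j.val + 1) : ℂ)]) :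
    (∀ i k : Fin 2, DifferentiableOn ℂ (fun z => F z i k) (Metric.ball 0 1)) ∧
      (∀ z ∈ Metric.ball (0 : ℂ) 1, (F z).det = (φ z).2) ∧
      (∀ z ∈ Metric.ball (0 : ℂ) 1, muE (F z) < 1) := by
  have hC : (n.choose (j.val + 1) : ℂ) ≠ 0 := Nat.cast_ne_zero.2 (Nat.choose_pos (by omega)).ne'
  obtain rfl : F = fun z => liftMatrix _ ((φ z).1 j) ((φ z).1 j.rev) (φ z).2 := funext hF
  have hy := differentiableOn_pi.1 hφ.fst
  refine ⟨differentiableOn_liftMatrix_apply (hy j) (hy j.rev) hφ.snd,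
    fun z _ => det_liftMatrix hC _ _ _, fun z hz => muE_lt_one_of_det_ne_zero ?_⟩
  obtain ⟨hq, β, hβ⟩ := hφval z hz
  intro x w hx hw hdet
  have key := mul_det_one_sub_liftMatrix_mul_diagonal hC ((φ z).1 j) ((φ z).1 j.rev) (φ z).2 x w
  rw [hdet, mul_zero, (hβ j).1, (hβ j.rev).1, Fin.rev_rev] at key
  exact reflection_pencil_ne_zero (hβ j).2 hq hx hw (by exact_mod_cast key.symm)

/-- any analytic `φ : 𝔻 → G̃ₙ` lifts: with entries rescaled by the
binomial coefficient `C = C(n,j)`, the matrix function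
`F_j = [[φ_j/C, φ_jφ_{n-j}/C² - φₙ],[1, φ_{n-j}/C]]` is analytic on `𝔻`,
`det F_j = φₙ`, and `μ_E(F_j(λ)) < 1` for all `λ ∈ 𝔻`. -/
theorem stmt13 (n : ℕ) (hn : 2 ≤ n) (φ : ℂ → (Fin (n - 1) → ℂ) × ℂ)
    (hφ : DifferentiableOn ℂ φ (Metric.ball 0 1))
    (hφval : ∀ z ∈ Metric.ball (0 : ℂ) 1, φ z ∈ Gtilde n)
    (j : Fin (n - 1)) (hj : j.val + 1 ≤ n / 2)
    (F : ℂ → Matrix (Fin 2) (Fin 2) ℂ)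
    (hF : ∀ z, F z =
      !![(φ z).1 j / (n.choose (j.val + 1) : ℂ),
          (φ z).1 j * (φ z).1 j.rev / (n.choose (j.val + 1) : ℂ) ^ 2 - (φ z).2;
        1, (φ z).1 j.rev / (n.choose (j.val + 1) : ℂ)]) :
    (∀ i k : Fin 2, DifferentiableOn ℂ (fun z => F z i k) (Metric.ball 0 1)) ∧
      (∀ z ∈ Metric.ball (0 : ℂ) 1, (F z).det = (φ z).2) ∧
      (∀ z ∈ Metric.ball (0 : ℂ) 1, muE (F z) < 1) :=
  stmt13_general n φ hφ hφval j F hF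
end

section
/- For ω in the closed unit disc and y = (y₁,…,y_{n-1},q) with |y_{n-j}| < C(n,j) and y_jy_{n-j} ≠ C(n,j)²q, the supremum over |ω| ≤ 1 of |(C(n,j)qω - y_j)/(y_{n-j}ω - C(n,j))| equals (C(n,j)|y_j - ȳ_{n-j}q| + |y_jy_{n-j} - C(n,j)²q|)/(C(n,j)² - |y_{n-j}|²). -/
/-!
Write `(a ω + b) / (c ω + d) = m + r ψ(ω)` with `ψ(ω) = (d̄ ω + c̄) / (c ω + d)`,
`m = (b d̄ - a c̄) / (|d|² - |c|²)` and `r = (a d - b c) / (|d|² - |c|²)`.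
When `|c| < |d|`, the identity `|c ω + d|² - |d̄ ω + c̄|² = (|d|² - |c|²)(1 - |ω|²)` shows that `ψ`
maps the closed unit disc into itself, and it is onto since its inverse is the map of the same
shape with `(c, d)` replaced by `(-c, d̄)`. Hence the image of the disc is the closed disc of
centre `m` and radius `|r|`, on which the largest modulus is `|m| + |r|`. The theorem is the case
`a = C q`, `b = -y₁`, `c = y₂`, `d = -C`.
-/

open Complex ComplexConjugate Metric Set

theorem norm_sq_mul_add_sub_norm_sq_conj_mul_add (c d z : ℂ) :
    ‖c * z + d‖ ^ 2 - ‖conj d * z + conj c‖ ^ 2 = (‖d‖ ^ 2 - ‖c‖ ^ 2) * (1 - ‖z‖ ^ 2) := by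
  simp only [← normSq_eq_norm_sq, normSq_apply, add_re, add_im, mul_re, mul_im, conj_re, conj_im]
  ring

theorem mul_conj_sub_mul_conj (c d : ℂ) :
    d * conj d - c * conj c = ((‖d‖ ^ 2 - ‖c‖ ^ 2 : ℝ) : ℂ) := by
  rw [mul_conj, mul_conj, normSq_eq_norm_sq, normSq_eq_norm_sq]; push_cast; ring

noncomputable def discMobius (c d z : ℂ) : ℂ := (conj d * z + conj c) / (c * z + d)

section discMobius

variable {c d z : ℂ}

theorem mul_add_ne_zero_of_norm_lt (h : ‖c‖ < ‖d‖) (hz : ‖z‖ ≤ 1) : c * z + d ≠ 0 := by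
  intro h0
  have hd : ‖d‖ = ‖c‖ * ‖z‖ := by rw [eq_neg_of_add_eq_zero_right h0, norm_neg, norm_mul]
  exact h.not_ge (hd ▸ mul_le_of_le_one_right (norm_nonneg c) hz)

theorem mapsTo_discMobius_closedBall (h : ‖c‖ < ‖d‖) :
    MapsTo (discMobius c d) (closedBall 0 1) (closedBall 0 1) := by
  intro z hz
  rw [mem_closedBall_zero_iff] at hz ⊢
  have hsq : ‖conj d * z + conj c‖ ^ 2 ≤ ‖c * z + d‖ ^ 2 := by
    have := norm_sq_mul_add_sub_norm_sq_conj_mul_add c d z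
    nlinarith [mul_nonneg (sub_nonneg.2 (pow_le_pow_left₀ (norm_nonneg c) h.le 2))
      (sub_nonneg.2 (pow_le_one₀ (n := 2) (norm_nonneg z) hz))]
  rw [discMobius, norm_div]
  exact div_le_one_of_le₀ ((pow_le_pow_iff_left₀ (norm_nonneg _) (norm_nonneg _) two_ne_zero).1 hsq)
    (norm_nonneg _)

theorem discMobius_discMobius_neg_conj (h : ‖c‖ < ‖d‖) (hz : ‖z‖ ≤ 1) :
    discMobius c d (discMobius (-c) (conj d) z) = z := by
  have h' : ‖-c‖ < ‖conj d‖ := by rwa [norm_neg, norm_conj]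
  have hden := mul_add_ne_zero_of_norm_lt h' hz
  have hD : d * conj d - c * conj c ≠ 0 := by
    rw [mul_conj_sub_mul_conj, ofReal_ne_zero]
    nlinarith [norm_nonneg c]
  simp only [discMobius, conj_conj, map_neg]
  rw [mul_div_assoc', mul_div_assoc', div_add' _ _ _ hden, div_add' _ _ _ hden,
    div_div_div_cancel_right₀ hden, div_eq_iff]
  · ring
  · contrapose! hD; linear_combination hD

theorem discMobius_image_closedBall (h : ‖c‖ < ‖d‖) :
    discMobius c d '' closedBall 0 1 = closedBall 0 1 := by
  refine (mapsTo_discMobius_closedBall h).image_subset.antisymm fun z hz => ?_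
  have h' : ‖-c‖ < ‖conj d‖ := by rwa [norm_neg, norm_conj]
  exact ⟨_, mapsTo_discMobius_closedBall h' hz,
    discMobius_discMobius_neg_conj h (mem_closedBall_zero_iff.1 hz)⟩

theorem div_eq_add_mul_discMobius (a b : ℂ) (hz : c * z + d ≠ 0) (hcd : ‖c‖ ≠ ‖d‖) :
    (a * z + b) / (c * z + d) =
      (b * conj d - a * conj c) / (‖d‖ ^ 2 - ‖c‖ ^ 2 : ℝ) +
        (a * d - b * c) / (‖d‖ ^ 2 - ‖c‖ ^ 2 : ℝ) * discMobius c d z := by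
  have hD := (mul_conj_sub_mul_conj c d).symm
  have hD0 : d * conj d - c * conj c ≠ 0 := by
    rw [← hD, ofReal_ne_zero, sub_ne_zero]
    exact fun h => hcd ((pow_left_inj₀ (norm_nonneg d) (norm_nonneg c) two_ne_zero).1 h).symm
  rw [hD, discMobius, div_mul_div_comm, div_add_div _ _ hD0 (mul_ne_zero hD0 hz),
    div_eq_div_iff hz (mul_ne_zero hD0 (mul_ne_zero hD0 hz))]
  ring

end discMobius

theorem isGreatest_norm_add_mul_closedBall (a b : ℂ) :
    IsGreatest ((fun z => ‖a + b * z‖) '' closedBall 0 1) (‖a‖ + ‖b‖) := by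
  set u := exp ((arg a - arg b : ℝ) * I)
  have hu : ‖u‖ = 1 := norm_exp_ofReal_mul_I _
  refine ⟨⟨u, mem_closedBall_zero_iff.2 hu.le, ?_⟩, ?_⟩
  · have hbu : b * u = ‖b‖ * exp (arg a * I) := by
      calc b * u = ‖b‖ * exp (arg b * I) * u := by rw [norm_mul_exp_arg_mul_I]
        _ = ‖b‖ * exp (arg a * I) := by rw [mul_assoc, ← exp_add]; push_cast; ring_nf
    calc ‖a + b * u‖ = ‖((‖a‖ + ‖b‖ : ℝ) : ℂ) * exp (arg a * I)‖ := by
          rw [hbu, ofReal_add, add_mul, norm_mul_exp_arg_mul_I]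
      _ = ‖a‖ + ‖b‖ := by
          rw [norm_mul, norm_exp_ofReal_mul_I, mul_one, norm_real,
            Real.norm_of_nonneg (by positivity)]
  · rintro _ ⟨z, hz, rfl⟩
    calc ‖a + b * z‖ ≤ ‖a‖ + ‖b‖ * ‖z‖ := (norm_add_le _ _).trans_eq (by rw [norm_mul])
      _ ≤ ‖a‖ + ‖b‖ := by
          gcongr
          exact mul_le_of_le_one_right (norm_nonneg b) (mem_closedBall_zero_iff.1 hz)

theorem isGreatest_norm_div_closedBall (a b : ℂ) {c d : ℂ} (h : ‖c‖ < ‖d‖) :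
    IsGreatest ((fun z => ‖(a * z + b) / (c * z + d)‖) '' closedBall 0 1)
      ((‖b * conj d - a * conj c‖ + ‖a * d - b * c‖) / (‖d‖ ^ 2 - ‖c‖ ^ 2)) := by
  set D : ℝ := ‖d‖ ^ 2 - ‖c‖ ^ 2
  have hD : 0 < D := by simp only [D]; nlinarith [norm_nonneg c]
  have himage : (fun z => ‖(a * z + b) / (c * z + d)‖) '' closedBall 0 1 =
      (fun w => ‖(b * conj d - a * conj c) / D + (a * d - b * c) / D * w‖) '' closedBall 0 1 := by
    conv_rhs => rw [← discMobius_image_closedBall h, image_image]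
    refine image_congr fun z hz => ?_
    rw [div_eq_add_mul_discMobius a b (mul_add_ne_zero_of_norm_lt h (mem_closedBall_zero_iff.1 hz))
      h.ne]
  have hvalue : (‖b * conj d - a * conj c‖ + ‖a * d - b * c‖) / D =
      ‖(b * conj d - a * conj c) / D‖ + ‖(a * d - b * c) / D‖ := by
    rw [norm_div, norm_div, norm_real, Real.norm_of_nonneg hD.le, add_div]
  rw [himage, hvalue]
  exact isGreatest_norm_add_mul_closedBall _ _

theorem stmt15_general (C : ℝ) (y1 y2 q : ℂ)
    (hy2 : ‖y2‖ < C) :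
    sSup {t : ℝ | ∃ ω : ℂ, ‖ω‖ ≤ 1 ∧
        t = ‖((C : ℂ) * q * ω - y1) / (y2 * ω - (C : ℂ))‖} =
      (C * ‖y1 - (starRingEnd ℂ) y2 * q‖
          + ‖y1 * y2 - (C : ℂ) ^ 2 * q‖)
        / (C ^ 2 - ‖y2‖ ^ 2) := by
  have hC : 0 ≤ C := (norm_nonneg y2).trans hy2.le
  have hnormC : ‖-(C : ℂ)‖ = C := by rw [norm_neg, norm_real, Real.norm_of_nonneg hC]
  have hset : {t : ℝ | ∃ ω : ℂ, ‖ω‖ ≤ 1 ∧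
      t = ‖((C : ℂ) * q * ω - y1) / (y2 * ω - (C : ℂ))‖} =
      (fun ω => ‖(C * q * ω + -y1) / (y2 * ω + -C)‖) '' closedBall 0 1 := by
    ext t
    simp only [mem_ofPred_eq, mem_image, mem_closedBall_zero_iff, ← sub_eq_add_neg, eq_comm]
  have hmax := isGreatest_norm_div_closedBall (C * q) (-y1) (hnormC.symm ▸ hy2)
  rw [hset, hmax.csSup_eq, hnormC]
  congr 2
  · rw [map_neg, conj_ofReal,
      show -y1 * -(C : ℂ) - C * q * conj y2 = C * (y1 - conj y2 * q) by ring,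
      norm_mul, norm_real, Real.norm_of_nonneg hC]
  · rw [show (C : ℂ) * q * -C - -y1 * y2 = y1 * y2 - C ^ 2 * q by ring]

/-- for `|y₂| < C` and `y₁y₂ ≠ C²q`, the supremum over the closed unit
disc of `|(Cqω - y₁)/(y₂ω - C)|` equals
`(C|y₁ - ȳ₂q| + |y₁y₂ - C²q|)/(C² - |y₂|²)`. -/
theorem stmt15 (C : ℝ) (hC : 0 < C) (y1 y2 q : ℂ)
    (hy2 : ‖y2‖ < C) (hq : y1 * y2 ≠ (C : ℂ) ^ 2 * q) :
    sSup {t : ℝ | ∃ ω : ℂ, ‖ω‖ ≤ 1 ∧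
        t = ‖((C : ℂ) * q * ω - y1) / (y2 * ω - (C : ℂ))‖} =
      (C * ‖y1 - (starRingEnd ℂ) y2 * q‖
          + ‖y1 * y2 - (C : ℂ) ^ 2 * q‖)
        / (C ^ 2 - ‖y2‖ ^ 2) :=
  stmt15_general C y1 y2 q hy2
end
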